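/- Let s be a square root on an MV-algebra M. Then s preserves binary meets: s(x ∧ y) = s(x) ∧ s(y) for all x, y ∈ M. -/
import Mathlib


class MVAlg (M : Type*) where
  add : M → M → M
  compl : M → M
  zero : M
  one : M
  add_comm : ∀ x y, add x y = add y x
  add_assoc : ∀ x y z, add (add x y) z = add x (add y z)
  add_zero : ∀ x, add x zero = x
  compl_compl : ∀ x, compl (compl x) = x
  add_one : ∀ x, add x one = one
  chang : ∀ x y, add x (compl (add x (compl y))) = add y (compl (add y (compl x)))
  compl_zero : compl zero = one

namespace MVAlg

variable {M : Type*} [MVAlg M]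

/-- x ⊙ y := (x' ⊕ y')' -/
def odot (x y : M) : M := compl (add (compl x) (compl y))

/-- x ≤ y iff x' ⊕ y = 1 -/
def le (x y : M) : Prop := add (compl x) y = one

/-- x ∧ y := x ⊙ (x' ⊕ y) -/
def inf (x y : M) : M := odot x (add (compl x) y)

/-- x ∨ y := (x ⊙ y') ⊕ y -/
def sup (x y : M) : M := add (odot x (compl y)) y

/-- x ⊖ y := x ⊙ y' -/
def sub (x y : M) : M := odot x (compl y)

/-- A square root on an MV-algebra. -/
def IsSquareRoot (s : M → M) : Prop :=
  (∀ x : M, odot (s x) (s x) = x) ∧ ∀ x y : M, le (odot y y) x → le y (s x)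

end MVAlg

namespace MVAlg

variable {M : Type*} [MVAlg M]

lemma compl_one : (compl (one : M)) = zero := by rw [← compl_zero, compl_compl]

lemma one_add (x : M) : add one x = one := by rw [add_comm, add_one]

lemma zero_add (x : M) : add zero x = x := by rw [add_comm, add_zero]

lemma add_compl (x : M) : add x (compl x) = one := by
  have h := chang x (one : M)
  rw [compl_one, add_zero, one_add] at h
  exact h

lemma le_of_eq_add {x c y : M} (h : add x c = y) : le x y := by
  unfold le
  rw [← h, ← add_assoc, add_comm (compl x) x, add_compl, one_add]

lemma add_sub {x y : M} (h : le x y) : add x (compl (add x (compl y))) = y := by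
  have h' : add (compl x) y = one := h
  rw [chang x y, add_comm y (compl x), h', compl_one, add_zero]

lemma le_refl' (x : M) : le x x := by
  unfold le
  rw [add_comm, add_compl]

lemma le_trans' {x y z : M} (h1 : le x y) (h2 : le y z) : le x z := by
  have e1 := add_sub h1
  have e2 := add_sub h2
  exact le_of_eq_add (c := add (compl (add x (compl y))) (compl (add y (compl z))))
    (by rw [← add_assoc, e1, e2])

lemma le_antisymm' {x y : M} (h1 : le x y) (h2 : le y x) : x = y := by
  have e1 := add_sub h1
  have h2' : add (compl y) x = one := h2
  rw [add_comm (compl y) x] at h2'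
  rw [h2', compl_one, add_zero] at e1
  exact e1

lemma add_le_add_left' {x y : M} (c : M) (h : le x y) : le (add c x) (add c y) := by
  have e := add_sub h
  exact le_of_eq_add (c := compl (add x (compl y))) (by rw [add_assoc, e])

lemma add_le_add_right' {x y : M} (c : M) (h : le x y) : le (add x c) (add y c) := by
  rw [add_comm x c, add_comm y c]
  exact add_le_add_left' c h

lemma le_compl {x y : M} (h : le x y) : le (compl y) (compl x) := by
  have h' : add (compl x) y = one := h
  show add (compl (compl y)) (compl x) = one
  rw [compl_compl, add_comm]
  exact h'

lemma odot_comm (x y : M) : odot x y = odot y x := by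
  unfold odot; rw [add_comm]

lemma odot_le_odot {a b c : M} (h : le a b) : le (odot a c) (odot b c) := by
  unfold odot
  apply le_compl
  exact add_le_add_right' (compl c) (le_compl h)

lemma odot_le_odot2 {a b c d : M} (h1 : le a c) (h2 : le b d) :
    le (odot a b) (odot c d) := by
  apply le_trans' (odot_le_odot h1)
  rw [odot_comm c b, odot_comm c d]
  exact odot_le_odot h2

lemma sup_eq (x y : M) : sup x y = add (compl (add (compl x) y)) y := by
  unfold sup odot
  rw [compl_compl]

lemma sup_comm' (x y : M) : sup x y = sup y x := by
  rw [sup_eq, sup_eq,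
    add_comm (compl (add (compl x) y)) y, add_comm (compl x) y,
    add_comm (compl (add (compl y) x)) x, add_comm (compl y) x]
  exact chang y x

lemma le_sup_right' (x y : M) : le y (sup x y) := by
  rw [sup_eq]
  exact le_of_eq_add (add_comm y _)

lemma le_sup_left' (x y : M) : le x (sup x y) := by
  rw [sup_comm']
  exact le_sup_right' y x

lemma sup_of_le {y z : M} (h : le y z) : sup y z = z := by
  have h' : add (compl y) z = one := h
  rw [sup_eq, h', compl_one, zero_add]

lemma sup_le' {x y z : M} (h1 : le x z) (h2 : le y z) : le (sup x y) z := by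
  have m : le (sup x y) (sup z y) := by
    unfold sup
    exact add_le_add_right' y (odot_le_odot h1)
  have e : sup z y = z := by rw [sup_comm']; exact sup_of_le h2
  rw [e] at m
  exact m

lemma inf_eq_compl_sup (x y : M) : inf x y = compl (sup (compl x) (compl y)) := by
  unfold inf sup odot
  rw [compl_compl, compl_compl]
  congr 1
  have h := chang (compl y) (compl x)
  rw [compl_compl, compl_compl] at h
  rw [← h, add_comm (compl (add x (compl y))) (compl y), add_comm x (compl y)]

lemma inf_le_left' (x y : M) : le (inf x y) x := by
  rw [inf_eq_compl_sup]
  have h := le_compl (le_sup_left' (compl x) (compl y))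
  rwa [compl_compl] at h

lemma inf_le_right' (x y : M) : le (inf x y) y := by
  rw [inf_eq_compl_sup]
  have h := le_compl (le_sup_right' (compl x) (compl y))
  rwa [compl_compl] at h

lemma le_inf' {x y z : M} (h1 : le z x) (h2 : le z y) : le z (inf x y) := by
  rw [inf_eq_compl_sup]
  have h := le_compl (sup_le' (le_compl h1) (le_compl h2))
  rwa [compl_compl] at h

end MVAlg

theorem square_root_inf {M : Type*} [MVAlg M] (s : M → M)
    (hs : MVAlg.IsSquareRoot s) (x y : M) :
    s (MVAlg.inf x y) = MVAlg.inf (s x) (s y) := by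
  open MVAlg in
  obtain ⟨hsq, hub⟩ := hs
  have mono : ∀ a b : M, le a b → le (s a) (s b) := fun a b h =>
    hub b (s a) (by rw [hsq]; exact h)
  apply le_antisymm'
  · exact le_inf' (mono _ _ (inf_le_left' x y)) (mono _ _ (inf_le_right' x y))
  · apply hub
    apply le_inf'
    · have h1 : le (odot (inf (s x) (s y)) (inf (s x) (s y))) (odot (s x) (s x)) :=
        odot_le_odot2 (inf_le_left' _ _) (inf_le_left' _ _)
      rwa [hsq] at h1
    · have h1 : le (odot (inf (s x) (s y)) (inf (s x) (s y))) (odot (s y) (s y)) :=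
        odot_le_odot2 (inf_le_right' _ _) (inf_le_right' _ _)
      rwa [hsq] at h1
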